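/- If a Banach space X satisfies ρ_uacs^X(t) < t/2 for some t > 0, then X is uniformly non-square (and hence superreflexive). -/
import Mathlib


open Filter Topology

/-- The uacs modulus of smoothness. -/
noncomputable def rhoUacs (X : Type*) [NormedAddCommGroup X] [NormedSpace ℝ X] (τ : ℝ) : ℝ :=
  sSup {r : ℝ | ∃ x y : X, ‖x‖ = 1 ∧ ‖y‖ = 1 ∧ 2 * (1 - τ) ≤ ‖x + y‖ ∧
    r = (‖x + τ • y‖ + ‖x - τ • y‖) / 2 - 1}

lemma uacs_aux {X : Type*} [NormedAddCommGroup X] [NormedSpace ℝ X] {u v : X}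
    (hu : ‖u‖ = 1) (hv : ‖v‖ = 1) {t a : ℝ} (ht : 0 < t) (ha : 0 ≤ a)
    (hsum : 2 - a ≤ ‖u + v‖) : 1 + t - (1 + t) * a ≤ ‖u + t • v‖ := by
  rcases le_total t 1 with h1 | h1
  · have heq : u + t • v = (u + v) - (1 - t) • v := by
      rw [sub_smul, one_smul]; abel
    have h2 : ‖u + v‖ - ‖(1 - t) • v‖ ≤ ‖u + t • v‖ := by
      rw [heq]; exact norm_sub_norm_le _ _
    have h3 : ‖(1 - t) • v‖ = 1 - t := by
      rw [norm_smul, hv, mul_one, Real.norm_eq_abs, abs_of_nonneg (by linarith)]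
    nlinarith
  · have heq : u + t • v = t • (u + v) - (t - 1) • u := by
      rw [sub_smul, one_smul, smul_add]; abel
    have h2 : ‖t • (u + v)‖ - ‖(t - 1) • u‖ ≤ ‖u + t • v‖ := by
      rw [heq]; exact norm_sub_norm_le _ _
    have h3 : ‖t • (u + v)‖ = t * ‖u + v‖ := by
      rw [norm_smul, Real.norm_eq_abs, abs_of_nonneg ht.le]
    have h4 : ‖(t - 1) • u‖ = t - 1 := by
      rw [norm_smul, hu, mul_one, Real.norm_eq_abs, abs_of_nonneg (by linarith)]
    nlinarith

theorem uniformly_nonSquare_of_rhoUacs_lt (X : Type*) [NormedAddCommGroup X] [NormedSpace ℝ X]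
    [CompleteSpace X] (t : ℝ) (ht : 0 < t) (h : rhoUacs X t < t / 2) :
    ∃ δ > (0 : ℝ), ∀ x y : X, ‖x‖ ≤ 1 → ‖y‖ ≤ 1 →
      ‖x + y‖ ≤ 2 * (1 - δ) ∨ ‖x - y‖ ≤ 2 * (1 - δ) := by
  by_contra hc
  push_neg at hc
  set ε : ℝ := t / (24 * (1 + t)) with hεdef
  have ht1 : (0 : ℝ) < 1 + t := by linarith
  have hεpos : 0 < ε := by positivity
  have hεsmall : ε < 1 / 24 := by
    rw [hεdef, div_lt_div_iff₀ (by positivity) (by norm_num)]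
    nlinarith
  have hεt : 6 * ((1 + t) * ε) = t / 4 := by
    rw [hεdef]; field_simp; ring
  obtain ⟨x, y, hx, hy, hxy1, hxy2⟩ := hc ε hεpos
  -- the vectors are almost unit vectors
  have hxn : 1 - 2 * ε ≤ ‖x‖ := by
    have := norm_add_le x y
    linarith
  have hyn : 1 - 2 * ε ≤ ‖y‖ := by
    have := norm_add_le x y
    linarith
  have hx0 : x ≠ 0 := by
    intro h0; rw [h0, norm_zero] at hxn; linarith
  have hy0 : y ≠ 0 := by
    intro h0; rw [h0, norm_zero] at hyn; linarith
  set x' : X := ‖x‖⁻¹ • x with hx'def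
  set y' : X := ‖y‖⁻¹ • y with hy'def
  have hx'1 : ‖x'‖ = 1 := norm_smul_inv_norm hx0
  have hy'1 : ‖y'‖ = 1 := norm_smul_inv_norm hy0
  have hxpos : 0 < ‖x‖ := norm_pos_iff.mpr hx0
  have hypos : 0 < ‖y‖ := norm_pos_iff.mpr hy0
  have hx'x : ‖x' - x‖ ≤ 2 * ε := by
    have heq : x' - x = (‖x‖⁻¹ - 1) • x := by rw [sub_smul, one_smul]
    have hinv : 1 ≤ ‖x‖⁻¹ := (one_le_inv₀ hxpos).mpr hx
    rw [heq, norm_smul, Real.norm_eq_abs, abs_of_nonneg (by linarith),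
      sub_mul, inv_mul_cancel₀ hxpos.ne', one_mul]
    linarith
  have hy'y : ‖y' - y‖ ≤ 2 * ε := by
    have heq : y' - y = (‖y‖⁻¹ - 1) • y := by rw [sub_smul, one_smul]
    have hinv : 1 ≤ ‖y‖⁻¹ := (one_le_inv₀ hypos).mpr hy
    rw [heq, norm_smul, Real.norm_eq_abs, abs_of_nonneg (by linarith),
      sub_mul, inv_mul_cancel₀ hypos.ne', one_mul]
    linarith
  have hsum : 2 - 6 * ε ≤ ‖x' + y'‖ := by
    have heq : x + y = (x' + y') + ((x - x') + (y - y')) := by abel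
    have h1 : ‖x + y‖ ≤ ‖x' + y'‖ + (‖x - x'‖ + ‖y - y'‖) :=
      heq ▸ (norm_add_le _ _).trans (by gcongr; exact norm_add_le _ _)
    rw [norm_sub_rev x x', norm_sub_rev y y'] at h1
    linarith
  have hdiff : 2 - 6 * ε ≤ ‖x' - y'‖ := by
    have heq : x - y = (x' - y') + ((x - x') + (y' - y)) := by abel
    have h1 : ‖x - y‖ ≤ ‖x' - y'‖ + (‖x - x'‖ + ‖y' - y‖) :=
      heq ▸ (norm_add_le _ _).trans (by gcongr; exact norm_add_le _ _)
    rw [norm_sub_rev x x'] at h1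
    linarith
  -- lower bounds for the two relevant norms
  have hb1 : 1 + t - (1 + t) * (6 * ε) ≤ ‖x' + t • y'‖ :=
    uacs_aux hx'1 hy'1 ht (by positivity) hsum
  have hb2 : 1 + t - (1 + t) * (6 * ε) ≤ ‖x' - t • y'‖ := by
    have h2 : 2 - 6 * ε ≤ ‖x' + (-y')‖ := by rwa [← sub_eq_add_neg]
    have := uacs_aux hx'1 (by rw [norm_neg, hy'1]) ht (by positivity) h2
    rwa [smul_neg, ← sub_eq_add_neg] at this
  -- the element of the defining set
  set r : ℝ := (‖x' + t • y'‖ + ‖x' - t • y'‖) / 2 - 1 with hrdef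
  have hmem : r ∈ {r : ℝ | ∃ x y : X, ‖x‖ = 1 ∧ ‖y‖ = 1 ∧ 2 * (1 - t) ≤ ‖x + y‖ ∧
      r = (‖x + t • y‖ + ‖x - t • y‖) / 2 - 1} := by
    refine ⟨x', y', hx'1, hy'1, ?_, rfl⟩
    have : 6 * ε ≤ 2 * t := by nlinarith
    linarith
  have hbdd : BddAbove {r : ℝ | ∃ x y : X, ‖x‖ = 1 ∧ ‖y‖ = 1 ∧ 2 * (1 - t) ≤ ‖x + y‖ ∧
      r = (‖x + t • y‖ + ‖x - t • y‖) / 2 - 1} := by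
    refine ⟨t, fun s hs => ?_⟩
    obtain ⟨u, v, hu, hv, _, hs⟩ := hs
    have h1 : ‖u + t • v‖ ≤ 1 + t := by
      calc ‖u + t • v‖ ≤ ‖u‖ + ‖t • v‖ := norm_add_le _ _
        _ = 1 + t := by rw [hu, norm_smul, hv, Real.norm_eq_abs, abs_of_nonneg ht.le, mul_one]
    have h2 : ‖u - t • v‖ ≤ 1 + t := by
      calc ‖u - t • v‖ ≤ ‖u‖ + ‖t • v‖ := norm_sub_le _ _
        _ = 1 + t := by rw [hu, norm_smul, hv, Real.norm_eq_abs, abs_of_nonneg ht.le, mul_one]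
    rw [hs]; linarith
  have hle : r ≤ rhoUacs X t := le_csSup hbdd hmem
  have hrlarge : t - t / 2 ≤ r - t / 4 := by
    rw [hrdef]
    nlinarith
  have hfin : r < t / 2 := lt_of_le_of_lt hle h
  linarith
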